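/- Let G be a finite simple graph in which every vertex has positive degree, and let the marked set M be a clique of size k ≥ 3 (every two distinct vertices of M are adjacent in G). Then for every real a there exists a state ψ : Dart(G) → ℂ such that: ψ(e) = a for every dart e that is not between two vertices of M (in particular on all darts at unmarked vertices and on all darts from marked vertices leaving the clique); ψ(e) = ψ(e.symm) for every dart e; and ψ is fixed by one step of the search algorithm, (S∘C∘Q)ψ = ψ. -/

import Mathlib

namespace GraphWalk

variable {V : Type*}

/-- The flip-flop shift operator `S` on the darts of a simple graph:
`(Sψ)(e) = ψ(e.symm)`. -/
noncomputable def shift (G : SimpleGraph V) (ψ : G.Dart → ℂ) : G.Dart → ℂ :=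
  fun e => ψ e.symm

/-- The Grover coin `C`:
`(Cψ)(e) = (2/deg(e.fst)) Σ_{e' : e'.fst = e.fst} ψ(e') − ψ(e)`. -/
noncomputable def coin [Fintype V] [DecidableEq V] (G : SimpleGraph V)
    [DecidableRel G.Adj] (ψ : G.Dart → ℂ) : G.Dart → ℂ :=
  fun e => (2 / (G.degree e.fst : ℂ)) *
      (∑ e' ∈ Finset.univ.filter (fun e' : G.Dart => e'.fst = e.fst), ψ e') - ψ e

/-- The query `Q`, flipping the sign of all amplitudes at marked vertices. -/
noncomputable def query [DecidableEq V] (G : SimpleGraph V) (M : Finset V)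
    (ψ : G.Dart → ℂ) : G.Dart → ℂ :=
  fun e => if e.fst ∈ M then -ψ e else ψ e

/-- One step of the search algorithm, `U' = S ∘ C ∘ Q`. -/
noncomputable def step [Fintype V] [DecidableEq V] (G : SimpleGraph V)
    [DecidableRel G.Adj] (M : Finset V) (ψ : G.Dart → ℂ) : G.Dart → ℂ :=
  shift G (coin G (query G M ψ))

/-- One step of the quantum walk without query, `U = S ∘ C`. -/
noncomputable def walk [Fintype V] [DecidableEq V] (G : SimpleGraph V)
    [DecidableRel G.Adj] (ψ : G.Dart → ℂ) : G.Dart → ℂ :=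
  shift G (coin G ψ)

end GraphWalk

/-!
After the query, the Grover coin fixes the amplitudes at a marked vertex as soon as they sum
to zero there, and at an unmarked vertex as soon as they are constant there; with the flip-flop
shift, a symmetric state with these two properties is therefore fixed by `S ∘ C ∘ Q`.
Take `ψ = a` off the clique and `ψ(u → w) = a + B u w` inside it: the zero-sum condition at
`u ∈ M` asks for a symmetric `B` with row sums `∑_{w ∈ M \ {u}} B u w = -deg(u) a`, and
prescribed row sums `r` on a set of size `k ≥ 3` are realised by
`B u w = (r u + r w) / (k - 2) - (∑ r) / ((k - 1)(k - 2))`.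
-/

open Finset

theorem Finset.exists_symm_sum_erase_eq {ι K : Type*} [DecidableEq ι] [Field K] [CharZero K]
    (s : Finset ι) (hs : 3 ≤ s.card) (r : ι → K) :
    ∃ B : ι → ι → K, (∀ u w, B u w = B w u) ∧ ∀ u ∈ s, ∑ w ∈ s.erase u, B u w = r u := by
  have hk1 : (s.card : K) - 1 ≠ 0 := by
    rw [sub_ne_zero]; exact_mod_cast (by omega : s.card ≠ 1)
  have hk2 : (s.card : K) - 2 ≠ 0 := by
    rw [sub_ne_zero]; exact_mod_cast (by omega : s.card ≠ 2)
  refine ⟨fun u w => (r u + r w) / (s.card - 2) - (∑ v ∈ s, r v) / ((s.card - 1) * (s.card - 2)),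
    fun u w => by simp only [add_comm], fun u hu => ?_⟩
  have hcard : ((s.erase u).card : K) = s.card - 1 := by
    rw [Finset.card_erase_of_mem hu, Nat.cast_pred (Finset.card_pos.mpr ⟨u, hu⟩)]
  rw [Finset.sum_sub_distrib, ← Finset.sum_div, Finset.sum_add_distrib,
    Finset.sum_erase_eq_sub (f := r) hu, Finset.sum_const, Finset.sum_const, nsmul_eq_mul,
    nsmul_eq_mul, hcard]
  field_simp
  ring

namespace SimpleGraph

variable {V : Type*} [Fintype V] [DecidableEq V] (G : SimpleGraph V) [DecidableRel G.Adj]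

theorem sum_dart_fst_eq_sum_neighborFinset {β : Type*} [AddCommMonoid β] (v : V) (f : V → β) :
    ∑ e ∈ univ.filter (fun e : G.Dart => e.fst = v), f e.snd
      = ∑ w ∈ G.neighborFinset v, f w := by
  refine Finset.sum_bij (fun e _ => e.snd) (fun e he => ?_) (fun e₁ he₁ e₂ he₂ h => ?_)
    (fun w hw => ⟨⟨(v, w), (G.mem_neighborFinset v w).mp hw⟩, by simp, rfl⟩) (fun _ _ => rfl)
  · rw [Finset.mem_filter] at he
    rw [mem_neighborFinset, ← he.2]
    exact e.adj
  · rw [Finset.mem_filter] at he₁ he₂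
    exact Dart.ext _ _ (Prod.ext (he₁.2.trans he₂.2.symm) h)

variable {G} in
theorem IsClique.neighborFinset_filter_mem {M : Finset V} (hM : G.IsClique (M : Set V))
    {u : V} (hu : u ∈ M) : (G.neighborFinset u).filter (· ∈ M) = M.erase u := by
  ext w
  simp only [Finset.mem_filter, mem_neighborFinset, Finset.mem_erase]
  exact ⟨fun ⟨hadj, hw⟩ => ⟨hadj.ne', hw⟩, fun ⟨hne, hw⟩ => ⟨hM hu hw hne.symm, hw⟩⟩

end SimpleGraph

namespace GraphWalk

variable {V : Type*} [DecidableEq V] {G : SimpleGraph V}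

section Walk

variable [Fintype V] [DecidableRel G.Adj]

theorem coin_apply_of_sum_eq_zero {ψ : G.Dart → ℂ} {e : G.Dart}
    (h : ∑ e' ∈ univ.filter (fun e' : G.Dart => e'.fst = e.fst), ψ e' = 0) :
    coin G ψ e = -ψ e := by
  rw [coin, h, mul_zero, zero_sub]

theorem coin_apply_of_forall_eq {ψ : G.Dart → ℂ} {e : G.Dart}
    (h : ∀ e' : G.Dart, e'.fst = e.fst → ψ e' = ψ e) : coin G ψ e = ψ e := by
  have hdeg : (G.degree e.fst : ℂ) ≠ 0 :=
    Nat.cast_ne_zero.mpr ((G.degree_pos_iff_exists_adj e.fst).mpr ⟨e.snd, e.adj⟩).ne'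
  have hsum : ∑ e' ∈ univ.filter (fun e' : G.Dart => e'.fst = e.fst), ψ e'
      = G.degree e.fst * ψ e := by
    rw [Finset.sum_congr rfl fun e' he' => h e' (Finset.mem_filter.mp he').2, Finset.sum_const,
      G.dart_fst_fiber_card_eq_degree, nsmul_eq_mul]
  rw [coin, hsum]
  field_simp
  ring

theorem step_eq_self {M : Finset V} {ψ : G.Dart → ℂ} (hsymm : ∀ e, ψ e.symm = ψ e)
    (hmarked : ∀ v ∈ M, ∑ e ∈ univ.filter (fun e : G.Dart => e.fst = v), ψ e = 0)
    (hunmarked : ∀ e e' : G.Dart, e.fst ∉ M → e'.fst = e.fst → ψ e' = ψ e) :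
    step G M ψ = ψ := by
  funext e
  change coin G (query G M ψ) e.symm = ψ e
  by_cases hm : e.symm.fst ∈ M
  · rw [coin_apply_of_sum_eq_zero]
    · simp only [query, if_pos hm, neg_neg, hsymm]
    · rw [Finset.sum_congr rfl fun e' he' => by
          rw [query, if_pos ((Finset.mem_filter.mp he').2 ▸ hm)],
        Finset.sum_neg_distrib, hmarked _ hm, neg_zero]
  · rw [coin_apply_of_forall_eq]
    · simp only [query, if_neg hm, hsymm]
    · intro e' he'
      have hm' : e'.fst ∉ M := he' ▸ hm
      simp only [query, if_neg hm, if_neg hm']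
      exact hunmarked e.symm e' hm he'

end Walk

variable (G) in
noncomputable def cliqueState (M : Finset V) (a : ℂ) (B : V → V → ℂ) : G.Dart → ℂ :=
  fun e => a + if e.fst ∈ M ∧ e.snd ∈ M then B e.fst e.snd else 0

variable {M : Finset V} {a : ℂ} {B : V → V → ℂ}

theorem cliqueState_apply_of_notMem {e : G.Dart} (he : ¬(e.fst ∈ M ∧ e.snd ∈ M)) :
    cliqueState G M a B e = a := by
  rw [cliqueState, if_neg he, add_zero]

theorem cliqueState_symm (hB : ∀ u w, B u w = B w u) (e : G.Dart) :
    cliqueState G M a B e.symm = cliqueState G M a B e := by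
  simp only [cliqueState, SimpleGraph.Dart.symm_toProd, Prod.fst_swap, Prod.snd_swap,
    and_comm (a := e.snd ∈ M), hB e.snd]

variable [Fintype V] [DecidableRel G.Adj]

theorem sum_cliqueState (hM : G.IsClique (M : Set V)) {u : V} (hu : u ∈ M) :
    ∑ e ∈ univ.filter (fun e : G.Dart => e.fst = u), cliqueState G M a B e
      = G.degree u * a + ∑ w ∈ M.erase u, B u w := by
  rw [Finset.sum_congr rfl fun e he => by rw [cliqueState, (Finset.mem_filter.mp he).2],
    G.sum_dart_fst_eq_sum_neighborFinset u (fun w => a + if u ∈ M ∧ w ∈ M then B u w else 0),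
    Finset.sum_add_distrib, Finset.sum_const, G.card_neighborFinset_eq_degree, nsmul_eq_mul]
  simp only [hu, true_and]
  rw [← Finset.sum_filter, hM.neighborFinset_filter_mem hu]

end GraphWalk

theorem marked_clique_stationary_exists_general {V : Type*} [Fintype V] [DecidableEq V]
    (G : SimpleGraph V) [DecidableRel G.Adj]
    (M : Finset V) (hcard : 3 ≤ M.card)
    (hclique : ∀ u ∈ M, ∀ v ∈ M, u ≠ v → G.Adj u v) :
    ∀ a : ℝ, ∃ ψ : G.Dart → ℂ,
      (∀ e : G.Dart, ¬(e.fst ∈ M ∧ e.snd ∈ M) → ψ e = (a : ℂ)) ∧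
      (∀ e : G.Dart, ψ e = ψ e.symm) ∧
      GraphWalk.step G M ψ = ψ := by
  intro a
  have hM : G.IsClique (M : Set V) := fun u hu w hw hne => hclique u hu w hw hne
  obtain ⟨B, hBsymm, hBsum⟩ :=
    M.exists_symm_sum_erase_eq hcard fun u => -(G.degree u * (a : ℂ))
  refine ⟨GraphWalk.cliqueState G M a B, fun e he => GraphWalk.cliqueState_apply_of_notMem he,
    fun e => (GraphWalk.cliqueState_symm hBsymm e).symm,
    GraphWalk.step_eq_self (GraphWalk.cliqueState_symm hBsymm) (fun u hu => ?_)
      (fun e e' he he' => ?_)⟩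
  · rw [GraphWalk.sum_cliqueState hM hu, hBsum u hu, add_neg_cancel]
  · rw [GraphWalk.cliqueState_apply_of_notMem fun h => he h.1,
      GraphWalk.cliqueState_apply_of_notMem fun h => he (he' ▸ h.1)]

/-- If the marked set `M` of a finite simple graph (every vertex of positive degree) is
a clique of size `k ≥ 3`, then for every real `a` there is a state `ψ` which equals `a`
on every dart not joining two vertices of `M`, is symmetric along every edge, and is
fixed by one step of the search algorithm `S ∘ C ∘ Q`: a marked `k`-clique is an
exceptional configuration. -/
theorem marked_clique_stationary_exists {V : Type*} [Fintype V] [DecidableEq V]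
    (G : SimpleGraph V) [DecidableRel G.Adj] (hdeg : ∀ v : V, 0 < G.degree v)
    (M : Finset V) (hcard : 3 ≤ M.card)
    (hclique : ∀ u ∈ M, ∀ v ∈ M, u ≠ v → G.Adj u v) :
    ∀ a : ℝ, ∃ ψ : G.Dart → ℂ,
      (∀ e : G.Dart, ¬(e.fst ∈ M ∧ e.snd ∈ M) → ψ e = (a : ℂ)) ∧
      (∀ e : G.Dart, ψ e = ψ e.symm) ∧
      GraphWalk.step G M ψ = ψ :=
  marked_clique_stationary_exists_general G M hcard hclique
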